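/- For every n ≥ 1, the assignment ι(β_i) = β_i for 1 ≤ i ≤ n−1 and ι(X_i) = β_{i−1}β_{i−2}⋯β_1·β_0²·β_1⁻¹⋯β_{i−2}⁻¹β_{i−1}⁻¹ for 1 ≤ i ≤ n extends to a well-defined group homomorphism ι : Br_n^1 → Br_{n+1}, and this homomorphism is injective. -/

import Mathlib

/-- The Artin braid relations on `N` generators `β_0, …, β_{N-1}`, recorded as relators:
`β_iβ_{i+1}β_i = β_{i+1}β_iβ_{i+1}` and `β_iβ_j = β_jβ_i` for `|i-j| ≥ 2`. -/
def braidRels (N : ℕ) : Set (FreeGroup (Fin N)) :=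
  { r | (∃ i j : Fin N, (i : ℕ) + 1 = (j : ℕ) ∧
          r = FreeGroup.of i * FreeGroup.of j * FreeGroup.of i *
              (FreeGroup.of j * FreeGroup.of i * FreeGroup.of j)⁻¹) ∨
        (∃ i j : Fin N, (i : ℕ) + 2 ≤ (j : ℕ) ∧
          r = FreeGroup.of i * FreeGroup.of j * (FreeGroup.of j * FreeGroup.of i)⁻¹) }

/-- The braid group on `N+1` strands, presented on the `N` generators `β_0, …, β_{N-1}`
subject to the Artin relations. -/
abbrev Braid (N : ℕ) : Type := PresentedGroup (braidRels N)

/-- Generators of the braid group with a frozen strand `Br^1_{m+1}`: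
`X i` (for `i : Fin (m+1)`) is the generator `X_{i+1}`, and `beta i` (for `i : Fin m`) is the
generator `β_{i+1}` (so the 1-based labels are `X_1, …, X_{m+1}` and `β_1, …, β_m`). -/
inductive FGen (m : ℕ) : Type
  | X : Fin (m + 1) → FGen m
  | beta : Fin m → FGen m

/-- The generator `X_{i+1}` as an element of the free group. -/
def Y {m : ℕ} (i : Fin (m + 1)) : FreeGroup (FGen m) := FreeGroup.of (FGen.X i)

/-- The generator `β_{i+1}` as an element of the free group. -/
def B {m : ℕ} (i : Fin m) : FreeGroup (FGen m) := FreeGroup.of (FGen.beta i)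

/-- The defining relators of the braid group with a frozen strand `Br^1_{m+1}`:
the braid relations among the `β`'s together with
`β_iX_iβ_i⁻¹ = X_{i+1}`, `β_iX_{i+1}β_i⁻¹ = X_{i+1}⁻¹X_iX_{i+1}` and `β_iX_jβ_i⁻¹ = X_j`
for `j ≠ i, i+1`. -/
def frozenRels (m : ℕ) : Set (FreeGroup (FGen m)) :=
  { r | (∃ i j : Fin m, (i : ℕ) + 1 = (j : ℕ) ∧
          r = B i * B j * B i * (B j * B i * B j)⁻¹) ∨
        (∃ i j : Fin m, (i : ℕ) + 2 ≤ (j : ℕ) ∧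
          r = B i * B j * (B j * B i)⁻¹) ∨
        (∃ i : Fin m, r = B i * Y i.castSucc * (B i)⁻¹ * (Y i.succ)⁻¹) ∨
        (∃ i : Fin m,
          r = B i * Y i.succ * (B i)⁻¹ * ((Y i.succ)⁻¹ * Y i.castSucc * Y i.succ)⁻¹) ∨
        (∃ (i : Fin m) (j : Fin (m + 1)), (j : ℕ) ≠ (i : ℕ) ∧ (j : ℕ) ≠ (i : ℕ) + 1 ∧
          r = B i * Y j * (B i)⁻¹ * (Y j)⁻¹) }

/-- The braid group with a frozen strand `Br^1_{m+1}` (so `Br^1_n` with `n = m+1 ≥ 1`). -/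
abbrev BrFrozen (m : ℕ) : Type := PresentedGroup (frozenRels m)

/-- The generator `β_k` of the braid group on `m+2` strands (junk value `1` out of range). -/
def bb (m : ℕ) (k : ℕ) : Braid (m + 1) :=
  if h : k < m + 1 then PresentedGroup.of (⟨k, h⟩ : Fin (m + 1)) else 1

/-- The word `β_k β_{k-1} ⋯ β_1 · β_0² · β_1⁻¹ ⋯ β_k⁻¹` in the braid group on `m+2`
strands; it is the prescribed image of the generator `X_{k+1}`. -/
def Xword (m : ℕ) (k : ℕ) : Braid (m + 1) :=
  (((List.range k).map fun j => bb m (k - j)).prod) * bb m 0 * bb m 0 *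
    (((List.range k).map fun j => bb m (k - j)).prod)⁻¹

/-!
The relations of `Br_n^1` hold for the proposed images. The only one that needs an idea is
`β_j X_{j+1} β_j⁻¹ = X_{j+1}⁻¹ X_j X_{j+1}`: since `ι(X_{j+1}) = β_j ι(X_j) β_j⁻¹`, it follows from
`β_j ι(X_j) β_j ι(X_j) = ι(X_j) β_j ι(X_j) β_j`. For `j = 1` this is a consequence of the braid
relation between `β_0` and `β_1` (as `ι(X_1) = β_0²`), and conjugation by `β_j β_{j+1}` carries the
pair `(β_j, ι(X_j))` to `(β_{j+1}, ι(X_{j+1}))`.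

For injectivity, `Br_{n+1}` acts on `{0, …, n} × Br_n^1`, a model of `Br_{n+1}` as the union of the
cosets `β_{p-1} ⋯ β_0 · ι(Br_n^1)` (Reidemeister–Schreier): `β_k` swaps `k` and `k+1` in the first
factor and multiplies the second one on the left by a cocycle. Under this action `ι(h)` sends
`(0, w)` to `(0, h w)`, so `ι(h)` determines `h`.
-/

namespace FrozenEmbed

variable {m : ℕ}

lemma bb_of_lt {a : ℕ} (h : a < m + 1) : bb m a = PresentedGroup.of ⟨a, h⟩ := dif_pos h

lemma bb_of_le {a : ℕ} (h : m + 1 ≤ a) : bb m a = 1 := dif_neg (by omega)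

lemma bb_braid {a b : ℕ} (h : a + 1 = b) (hb : b ≤ m) :
    bb m a * bb m b * bb m a = bb m b * bb m a * bb m b := by
  rw [bb_of_lt (by omega), bb_of_lt (by omega)]
  exact PresentedGroup.mk_eq_mk_of_mul_inv_mem (Or.inl ⟨_, _, h, rfl⟩)

lemma commute_bb {a b : ℕ} (h : a + 2 ≤ b) : Commute (bb m a) (bb m b) := by
  rcases lt_or_ge b (m + 1) with hb | hb
  · rw [bb_of_lt (by omega), bb_of_lt hb]
    exact PresentedGroup.mk_eq_mk_of_mul_inv_mem (Or.inr ⟨_, _, h, rfl⟩)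
  · rw [bb_of_le hb]
    exact Commute.one_right _

-- `frozenBeta m i = β_{i+1}` and `frozenX m i = X_{i+1}`, with junk value `1` out of range.
def frozenBeta (m i : ℕ) : BrFrozen m :=
  if h : i < m then PresentedGroup.of (FGen.beta ⟨i, h⟩) else 1

def frozenX (m i : ℕ) : BrFrozen m :=
  if h : i < m + 1 then PresentedGroup.of (FGen.X ⟨i, h⟩) else 1

lemma frozenBeta_of_lt {a : ℕ} (h : a < m) :
    frozenBeta m a = PresentedGroup.of (FGen.beta ⟨a, h⟩) := dif_pos h

lemma frozenX_of_lt {a : ℕ} (h : a < m + 1) :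
    frozenX m a = PresentedGroup.of (FGen.X ⟨a, h⟩) := dif_pos h

lemma frozenBeta_of_le {a : ℕ} (h : m ≤ a) : frozenBeta m a = 1 := dif_neg (by omega)

lemma frozenX_of_le {a : ℕ} (h : m + 1 ≤ a) : frozenX m a = 1 := dif_neg (by omega)

lemma frozenBeta_braid {a b : ℕ} (h : a + 1 = b) (hb : b < m) :
    frozenBeta m a * frozenBeta m b * frozenBeta m a =
      frozenBeta m b * frozenBeta m a * frozenBeta m b := by
  rw [frozenBeta_of_lt (by omega), frozenBeta_of_lt hb]
  exact PresentedGroup.mk_eq_mk_of_mul_inv_mem (Or.inl ⟨_, _, h, rfl⟩)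

lemma commute_frozenBeta {a b : ℕ} (h : a + 2 ≤ b) :
    Commute (frozenBeta m a) (frozenBeta m b) := by
  rcases lt_or_ge b m with hb | hb
  · rw [frozenBeta_of_lt (by omega), frozenBeta_of_lt hb]
    exact PresentedGroup.mk_eq_mk_of_mul_inv_mem (Or.inr (Or.inl ⟨_, _, h, rfl⟩))
  · rw [frozenBeta_of_le hb]
    exact Commute.one_right _

lemma frozenBeta_mul_frozenX {a : ℕ} (ha : a < m) :
    frozenBeta m a * frozenX m a = frozenX m (a + 1) * frozenBeta m a := by
  rw [← mul_inv_eq_iff_eq_mul, frozenBeta_of_lt ha, frozenX_of_lt (by omega),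
    frozenX_of_lt (by omega)]
  exact PresentedGroup.mk_eq_mk_of_mul_inv_mem (Or.inr (Or.inr (Or.inl ⟨⟨a, ha⟩, rfl⟩)))

lemma frozenBeta_conj_frozenX_succ {a : ℕ} (ha : a < m) :
    frozenBeta m a * frozenX m (a + 1) * (frozenBeta m a)⁻¹ =
      (frozenX m (a + 1))⁻¹ * frozenX m a * frozenX m (a + 1) := by
  rw [frozenBeta_of_lt ha, frozenX_of_lt (by omega), frozenX_of_lt (by omega)]
  exact PresentedGroup.mk_eq_mk_of_mul_inv_mem (Or.inr (Or.inr (Or.inr (Or.inl ⟨⟨a, ha⟩, rfl⟩))))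

lemma commute_frozenBeta_frozenX {a b : ℕ} (hba : b ≠ a) (hba' : b ≠ a + 1) :
    Commute (frozenBeta m a) (frozenX m b) := by
  rcases lt_or_ge a m with ha | ha
  · rcases lt_or_ge b (m + 1) with hb | hb
    · rw [Commute, SemiconjBy, ← mul_inv_eq_iff_eq_mul, frozenBeta_of_lt ha, frozenX_of_lt hb]
      exact PresentedGroup.mk_eq_mk_of_mul_inv_mem
        (Or.inr (Or.inr (Or.inr (Or.inr ⟨⟨a, ha⟩, ⟨b, hb⟩, hba, hba', rfl⟩))))
    · rw [frozenX_of_le hb]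
      exact Commute.one_right _
  · rw [frozenBeta_of_le ha]
    exact Commute.one_left _

lemma commute_frozenBeta_frozenX_mul {a : ℕ} (ha : a < m) :
    Commute (frozenBeta m a) (frozenX m a * frozenX m (a + 1)) := by
  have h := frozenBeta_conj_frozenX_succ ha
  rw [mul_inv_eq_iff_eq_mul] at h
  calc frozenBeta m a * (frozenX m a * frozenX m (a + 1))
      = frozenX m (a + 1) * (frozenBeta m a * frozenX m (a + 1)) := by
        rw [← mul_assoc, frozenBeta_mul_frozenX ha, mul_assoc]
    _ = frozenX m a * frozenX m (a + 1) * frozenBeta m a := by rw [h]; group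

section GroupIdentities

variable {G : Type*} [Group G]

lemma braid4_sq_of_braid {a b : G} (h : a * b * a = b * a * b) :
    b * (a * a) * b * (a * a) = a * a * b * (a * a) * b :=
  calc b * (a * a) * b * (a * a) = b * a * (a * b * a) * a := by group
    _ = b * a * (b * a * b) * a := by rw [h]
    _ = (b * a * b) * (a * b * a) := by group
    _ = (a * b * a) * (a * b * a) := by rw [h]
    _ = (a * b * a) * (b * a * b) := by rw [h]
    _ = a * (b * a * b) * a * b := by group
    _ = a * (a * b * a) * a * b := by rw [h]
    _ = a * a * b * (a * a) * b := by group

lemma conj_conj_of_braid4 {b x : G} (h : b * x * b * x = x * b * x * b) :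
    b * (b * x * b⁻¹) * b⁻¹ = (b * x * b⁻¹)⁻¹ * x * (b * x * b⁻¹) := by
  have h' : x * b * x * b⁻¹ = b⁻¹ * x * b * x :=
    calc x * b * x * b⁻¹ = b⁻¹ * (b * x * b * x) * b⁻¹ := by group
      _ = b⁻¹ * (x * b * x * b) * b⁻¹ := by rw [h]
      _ = b⁻¹ * x * b * x := by group
  calc b * (b * x * b⁻¹) * b⁻¹ = b * x⁻¹ * (x * b * x * b⁻¹) * b⁻¹ := by group
    _ = b * x⁻¹ * (b⁻¹ * x * b * x) * b⁻¹ := by rw [h']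
    _ = (b * x * b⁻¹)⁻¹ * x * (b * x * b⁻¹) := by group

end GroupIdentities

def descProd (m k : ℕ) : Braid (m + 1) := ((List.range k).map fun j => bb m (k - j)).prod

lemma descProd_zero : descProd m 0 = 1 := rfl

lemma descProd_succ (k : ℕ) : descProd m (k + 1) = bb m (k + 1) * descProd m k := by
  rw [descProd, descProd, List.range_succ_eq_map, List.map_cons, List.prod_cons, List.map_map]
  congr 2
  exact List.map_congr_left fun a _ => by simp

lemma Xword_eq (k : ℕ) :
    Xword m k = descProd m k * (bb m 0 * bb m 0) * (descProd m k)⁻¹ := by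
  simp only [Xword, descProd, mul_assoc]

lemma Xword_zero : Xword m 0 = bb m 0 * bb m 0 := by
  rw [Xword_eq, descProd_zero, one_mul, inv_one, mul_one]

lemma Xword_succ (k : ℕ) : Xword m (k + 1) = bb m (k + 1) * Xword m k * (bb m (k + 1))⁻¹ := by
  rw [Xword_eq, Xword_eq, descProd_succ]
  group

lemma commute_bb_descProd {b k : ℕ} (h : k + 2 ≤ b) : Commute (bb m b) (descProd m k) := by
  induction k with
  | zero => exact Commute.one_right _
  | succ k ih =>
    rw [descProd_succ]
    exact (commute_bb (by omega)).symm.mul_right (ih (by omega))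

lemma commute_bb_Xword_of_lt {b k : ℕ} (h : k + 2 ≤ b) : Commute (bb m b) (Xword m k) := by
  have h0 : Commute (bb m b) (bb m 0) := (commute_bb (by omega)).symm
  have hU := commute_bb_descProd (m := m) h
  rw [Xword_eq]
  exact (hU.mul_right (h0.mul_right h0)).mul_right hU.inv_right

lemma bb_mul_descProd {a k : ℕ} (ha : 1 ≤ a) (hak : a + 1 ≤ k) (hk : k ≤ m) :
    bb m a * descProd m k = descProd m k * bb m (a + 1) := by
  induction k with
  | zero => omega
  | succ k ih =>
    rw [descProd_succ]
    rcases lt_or_eq_of_le (Nat.le_of_lt_succ hak) with hlt | rfl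
    · rw [← mul_assoc, (commute_bb (by omega)).eq, mul_assoc, ih hlt (by omega), mul_assoc]
    · obtain ⟨j, rfl⟩ : ∃ j, a = j + 1 := ⟨a - 1, by omega⟩
      rw [descProd_succ, ← mul_assoc, ← mul_assoc, bb_braid rfl hk, mul_assoc _ _ (descProd m j),
        (commute_bb_descProd (by omega)).eq]
      group

lemma commute_bb_Xword_of_gt {a k : ℕ} (ha : 1 ≤ a) (hak : a + 1 ≤ k) (hk : k ≤ m) :
    Commute (bb m a) (Xword m k) := by
  have hconj : bb m a = descProd m k * bb m (a + 1) * (descProd m k)⁻¹ :=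
    eq_mul_inv_iff_mul_eq.mpr (bb_mul_descProd ha hak hk)
  have h0 : Commute (bb m (a + 1)) (bb m 0) := (commute_bb (by omega)).symm
  rw [hconj, Xword_eq]
  exact (h0.mul_right h0).conj _

lemma bb_succ_Xword_braid4 {i : ℕ} (hi : i + 1 ≤ m) :
    bb m (i + 1) * Xword m i * bb m (i + 1) * Xword m i =
      Xword m i * bb m (i + 1) * Xword m i * bb m (i + 1) := by
  induction i with
  | zero =>
    rw [Xword_zero]
    exact braid4_sq_of_braid (bb_braid rfl hi)
  | succ i ih =>
    set g := bb m (i + 1) * bb m (i + 1 + 1) with hg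
    have hb : g * bb m (i + 1) * g⁻¹ = bb m (i + 1 + 1) := by
      rw [mul_inv_eq_iff_eq_mul, bb_braid rfl (by omega), mul_assoc]
    have hx : g * Xword m i * g⁻¹ = Xword m (i + 1) := by
      rw [Xword_succ, hg, mul_assoc (bb m (i + 1)), (commute_bb_Xword_of_lt (by omega)).eq]
      group
    simpa only [map_mul, MulAut.conj_apply, hb, hx] using
      congrArg (MulAut.conj g) (ih (by omega))

def iotaGen (m : ℕ) : FGen m → Braid (m + 1)
  | .X k => Xword m k
  | .beta i => PresentedGroup.of i.succ

lemma iotaGen_beta (i : Fin m) : iotaGen m (.beta i) = bb m (i + 1) :=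
  (bb_of_lt (by omega)).symm

lemma iotaGen_X (k : Fin (m + 1)) : iotaGen m (.X k) = Xword m k := rfl

lemma iotaGen_rels : ∀ r ∈ frozenRels m, FreeGroup.lift (iotaGen m) r = 1 := by
  rintro r (⟨i, j, hij, rfl⟩ | ⟨i, j, hij, rfl⟩ | ⟨i, rfl⟩ | ⟨i, rfl⟩ | ⟨i, j, hj, hj', rfl⟩) <;>
    simp only [B, Y, map_mul, map_inv, FreeGroup.lift_apply_of, mul_inv_eq_one, iotaGen_beta,
      iotaGen_X, Fin.val_castSucc, Fin.val_succ]
  · exact bb_braid (by omega) (by omega)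
  · exact (commute_bb (by omega)).eq
  · exact (Xword_succ _).symm
  · rw [Xword_succ]
    exact conj_conj_of_braid4 (bb_succ_Xword_braid4 (by omega))
  · have hc : Commute (bb m (i + 1)) (Xword m j) := by
      rcases lt_or_gt_of_ne hj with h | h
      · exact commute_bb_Xword_of_lt (by omega)
      · exact commute_bb_Xword_of_gt (by omega) (by omega) (by omega)
    rw [hc.eq, mul_inv_cancel_right]

def iota : BrFrozen m →* Braid (m + 1) := PresentedGroup.toGroup iotaGen_rels

lemma iota_of (g : FGen m) : iota (PresentedGroup.of g) = iotaGen m g := PresentedGroup.toGroup.of _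

open Equiv

/-- `(p, w)` stands for the braid `(β_{p-1} ⋯ β_0) · ι(w)`; `cocycle m k p` is the element `c` of
`Br^1` with `β_k (β_{p-1} ⋯ β_0) = (β_{q-1} ⋯ β_0) · ι(c)`, where `q` is `p` with `k` and `k+1`
swapped. -/
def cocycle (m k p : ℕ) : BrFrozen m :=
  if p = k then 1 else if p = k + 1 then frozenX m k
  else if p < k then frozenBeta m (k - 1) else frozenBeta m k

lemma cocycle_braid {k n : ℕ} (hk : k + 1 ≤ m) (hn : n ≤ m + 1) :
    cocycle m k (swap (k + 1) (k + 1 + 1) (swap k (k + 1) n)) *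
        cocycle m (k + 1) (swap k (k + 1) n) * cocycle m k n =
      cocycle m (k + 1) (swap k (k + 1) (swap (k + 1) (k + 1 + 1) n)) *
        cocycle m k (swap (k + 1) (k + 1 + 1) n) * cocycle m (k + 1) n := by
  obtain h | rfl | rfl | rfl | h :
      n < k ∨ n = k ∨ n = k + 1 ∨ n = k + 1 + 1 ∨ k + 3 ≤ n := by omega
  all_goals simp (disch := omega) only [swap_apply_left, swap_apply_right, swap_apply_of_ne_of_ne,
      cocycle, if_pos, if_neg, ↓reduceIte, Nat.add_sub_cancel, one_mul, mul_one]
  · exact frozenBeta_braid (by omega) (by omega)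
  · exact frozenBeta_mul_frozenX (by omega)
  · simpa only [mul_assoc] using (commute_frozenBeta_frozenX_mul (m := m) (by omega)).eq.symm
  · exact frozenBeta_braid rfl (by omega)

lemma cocycle_comm {k l n : ℕ} (hkl : k + 2 ≤ l) (hl : l ≤ m) (hn : n ≤ m + 1) :
    cocycle m k (swap l (l + 1) n) * cocycle m l n =
      cocycle m l (swap k (k + 1) n) * cocycle m k n := by
  obtain h | rfl | rfl | h | rfl | rfl | h :
      n < k ∨ n = k ∨ n = k + 1 ∨ (k + 2 ≤ n ∧ n < l) ∨ n = l ∨ n = l + 1 ∨ l + 2 ≤ n := by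
    omega
  all_goals simp (disch := omega) only [swap_apply_left, swap_apply_right, swap_apply_of_ne_of_ne,
    cocycle, if_pos, if_neg, ↓reduceIte, one_mul, mul_one]
  · exact (commute_frozenBeta (by omega)).eq
  · exact (commute_frozenBeta_frozenX (by omega) (by omega)).eq.symm
  · exact (commute_frozenBeta (by omega)).eq
  · exact (commute_frozenBeta_frozenX (by omega) (by omega)).eq
  · exact (commute_frozenBeta hkl).eq

def genPerm (k : Fin (m + 1)) : Perm (Fin (m + 2) × BrFrozen m) :=
  prodShear (swap k.castSucc k.succ) fun p => Equiv.mulLeft (cocycle m k p)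

lemma genPerm_apply (k : Fin (m + 1)) (p : Fin (m + 2)) (w : BrFrozen m) :
    genPerm k (p, w) = (swap k.castSucc k.succ p, cocycle m k p * w) := rfl

lemma val_swap_castSucc_succ (k : Fin (m + 1)) (p : Fin (m + 2)) :
    (swap k.castSucc k.succ p : ℕ) = swap (k : ℕ) (k + 1) (p : ℕ) :=
  (Fin.val_injective.swap_apply _ _ _).symm

lemma genPerm_braid (k l : Fin (m + 1)) (hkl : (k : ℕ) + 1 = l) :
    genPerm k * genPerm l * genPerm k = genPerm l * genPerm k * genPerm l := by
  ext ⟨p, w⟩ : 1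
  simp only [Perm.mul_apply, genPerm_apply]
  refine Prod.ext (Fin.ext ?_) ?_
  · simp only [val_swap_castSucc_succ]
    rw [← hkl]
    simp only [swap_apply_def]
    split_ifs <;> omega
  · simp only [val_swap_castSucc_succ, ← mul_assoc]
    rw [← hkl, cocycle_braid (by omega) (by omega)]

lemma genPerm_comm (k l : Fin (m + 1)) (hkl : (k : ℕ) + 2 ≤ l) :
    genPerm k * genPerm l = genPerm l * genPerm k := by
  ext ⟨p, w⟩ : 1
  simp only [Perm.mul_apply, genPerm_apply]
  refine Prod.ext (Fin.ext ?_) ?_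
  · simp only [val_swap_castSucc_succ]
    simp only [swap_apply_def]
    split_ifs <;> omega
  · simp only [val_swap_castSucc_succ, ← mul_assoc]
    rw [cocycle_comm hkl (by omega) (by omega)]

lemma genPerm_rels : ∀ r ∈ braidRels (m + 1), FreeGroup.lift (genPerm (m := m)) r = 1 := by
  rintro r (⟨i, j, hij, rfl⟩ | ⟨i, j, hij, rfl⟩) <;>
    simp only [map_mul, map_inv, FreeGroup.lift_apply_of, mul_inv_eq_one]
  · exact genPerm_braid i j hij
  · exact genPerm_comm i j hij

def braidAction : Braid (m + 1) →* Perm (Fin (m + 2) × BrFrozen m) :=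
  PresentedGroup.toGroup genPerm_rels

lemma braidAction_bb {a : ℕ} (h : a < m + 1) : braidAction (bb m a) = genPerm ⟨a, h⟩ := by
  rw [bb_of_lt h]
  exact PresentedGroup.toGroup.of _

lemma braidAction_bb_succ_apply_zero {k : ℕ} (hk : k < m) (w : BrFrozen m) :
    braidAction (bb m (k + 1)) (0, w) = (0, frozenBeta m k * w) := by
  rw [braidAction_bb (by omega), genPerm_apply, swap_apply_of_ne_of_ne]
  · simp [cocycle]
  · simp [Fin.ext_iff]
  · simp [Fin.ext_iff]

lemma braidAction_Xword_apply_zero {k : ℕ} (hk : k ≤ m) (w : BrFrozen m) :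
    braidAction (Xword m k) (0, w) = (0, frozenX m k * w) := by
  induction k generalizing w with
  | zero =>
    rw [Xword_zero, map_mul, Perm.mul_apply, braidAction_bb (by omega), genPerm_apply,
      genPerm_apply]
    simp [cocycle]
  | succ k ih =>
    have hinv : (braidAction (bb m (k + 1)))⁻¹ (0, w) = (0, (frozenBeta m k)⁻¹ * w) := by
      rw [Perm.inv_eq_iff_eq, braidAction_bb_succ_apply_zero (by omega), mul_inv_cancel_left]
    rw [Xword_succ, map_mul, map_mul, map_inv, Perm.mul_apply, Perm.mul_apply, hinv,
      ih (by omega), braidAction_bb_succ_apply_zero (by omega), ← mul_assoc, ← mul_assoc,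
      frozenBeta_mul_frozenX (by omega), mul_inv_cancel_right]

lemma braidAction_iota_of_apply_zero (g : FGen m) (w : BrFrozen m) :
    braidAction (iota (PresentedGroup.of g)) (0, w) = (0, PresentedGroup.of g * w) := by
  rw [iota_of]
  cases g with
  | X k => rw [iotaGen_X, braidAction_Xword_apply_zero (by omega), frozenX_of_lt]
  | beta i => rw [iotaGen_beta, braidAction_bb_succ_apply_zero i.isLt, frozenBeta_of_lt]

lemma braidAction_iota_apply_zero (h w : BrFrozen m) :
    braidAction (iota h) (0, w) = (0, h * w) := by
  induction h using PresentedGroup.induction_on with | H z => ?_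
  induction z using FreeGroup.induction_on generalizing w with
  | C1 => simp
  | of g => exact braidAction_iota_of_apply_zero g w
  | inv_of g ih => rw [map_inv, map_inv, map_inv, Perm.inv_eq_iff_eq, ih, mul_inv_cancel_left]
  | mul x y hx hy => rw [map_mul, map_mul, map_mul, Perm.mul_apply, hy, hx, mul_assoc]

lemma iota_injective : Function.Injective (iota (m := m)) := fun a b hab => by
  have h := (braidAction_iota_apply_zero a 1).symm.trans (hab ▸ braidAction_iota_apply_zero b 1)
  simpa only [Prod.mk.injEq, mul_one, true_and] using h

end FrozenEmbed

theorem frozen_embeds_in_braid (m : ℕ) :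
    ∃ ι : BrFrozen m →* Braid (m + 1),
      (∀ i : Fin m,
        ι (PresentedGroup.of (FGen.beta i)) = PresentedGroup.of (i.succ : Fin (m + 1))) ∧
      (∀ k : Fin (m + 1), ι (PresentedGroup.of (FGen.X k)) = Xword m (k : ℕ)) ∧
      Function.Injective ι :=
  ⟨FrozenEmbed.iota, fun _ => FrozenEmbed.iota_of _, fun _ => FrozenEmbed.iota_of _,
    FrozenEmbed.iota_injective⟩
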